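/- arXiv:math/0601412 — 4 statements merged into one kernel-verified Lean document; each statement's English description precedes it below -/
import Mathlib

section
/- Let n ≥ 1 and R > 0. Then ∫_{B(0,R) ⊂ ℝ^{2n}} u_R(z) dz = (π^{n+1/2}·Γ(n + 3/2) / (4n·Γ(n)·Γ(n+2))) · R^{2n+2}. Equivalently, with Q = 2n+2, this equals (π^{(Q−1)/2}·Γ((Q+1)/2) / (2(Q−2)·Γ((Q+2)/2)·Γ((Q−2)/2))) · R^Q. -/
/-! Polar coordinates give `∫_{B(0,R)} u_R = 2n · |B(0,1)| · ∫₀^R r^{2n-1} u_R(r) dr`, with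
`|B(0,1)| = πⁿ / Γ(n+1)`. The substitution `r = R sin θ` turns `u_R(r)` into `R² φ(θ)` with
`φ(θ) = π/8 + sin θ cos θ / 4 - θ / 4` (`uAngle`), and `φ' = -sin² / 2`, `φ(π/2) = 0`. One integration by
parts therefore reduces the radial integral to the Wallis integral
`R^{2n+2} / (4n) · ∫₀^{π/2} sin^{2n+2} = R^{2n+2} / (4n) · √π Γ(n + 3/2) / (2 Γ(n + 2))`. -/

open Metric MeasureTheory Real

/-- The map `z = (x, y) ↦ z⊥ = (y, -x)` on `ℝ^{2n}`. -/
noncomputable def zperp (n : ℕ) (z : EuclideanSpace ℝ (Fin (2 * n))) :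
    EuclideanSpace ℝ (Fin (2 * n)) := WithLp.toLp 2 (fun i : Fin (2 * n) =>
  if h : (i : ℕ) < n then z ⟨(i : ℕ) + n, by have := i.isLt; omega⟩
  else -z ⟨(i : ℕ) - n, by have := i.isLt; omega⟩)

/-- The candidate isoperimetric profile `u_R` on `ℝ^{2n}`. -/
noncomputable def uR (n : ℕ) (R : ℝ) (z : EuclideanSpace ℝ (Fin (2 * n))) : ℝ :=
  if ‖z‖ ≤ R then
    π * R ^ 2 / 8 + ‖z‖ / 4 * Real.sqrt (R ^ 2 - ‖z‖ ^ 2) - R ^ 2 / 4 * Real.arcsin (‖z‖ / R)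
  else 0

/-- The class `D(R)`: continuous nonnegative functions on the closed ball, vanishing on the
sphere, `C²` inside, `W^{1,1}` inside, whose support is not contained in any smaller ball. -/
def memD (n : ℕ) (R : ℝ) (u : EuclideanSpace ℝ (Fin (2 * n)) → ℝ) : Prop :=
  ContinuousOn u (closedBall 0 R) ∧
  (∀ z ∈ closedBall (0 : EuclideanSpace ℝ (Fin (2 * n))) R, 0 ≤ u z) ∧
  (∀ z ∈ sphere (0 : EuclideanSpace ℝ (Fin (2 * n))) R, u z = 0) ∧
  ContDiffOn ℝ 2 u (ball 0 R) ∧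
  IntegrableOn u (ball 0 R) ∧
  IntegrableOn (fun z => gradient u z) (ball 0 R) ∧
  (∀ r : ℝ, r < R → ¬ (Function.support u ∩ closedBall 0 R ⊆ ball 0 r))

/-- Half the volume: `∫_{B(0,R)} u`. -/
noncomputable def hVol (n : ℕ) (R : ℝ) (u : EuclideanSpace ℝ (Fin (2 * n)) → ℝ) : ℝ :=
  ∫ z in ball (0 : EuclideanSpace ℝ (Fin (2 * n))) R, u z

/-- The H-perimeter functional: `∫_{B(0,R)} |∇u(z) + z⊥/2| dz`. -/
noncomputable def hPer (n : ℕ) (R : ℝ) (u : EuclideanSpace ℝ (Fin (2 * n)) → ℝ) : ℝ :=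
  ∫ z in ball (0 : EuclideanSpace ℝ (Fin (2 * n))) R,
    ‖gradient u z + (1 / 2 : ℝ) • zperp n z‖

open Set

theorem integral_sin_pow_zero_pi_div_two (k : ℕ) :
    ∫ θ in (0 : ℝ)..(π / 2), sin θ ^ k = √π * Gamma ((k + 1) / 2) / (2 * Gamma (k / 2 + 1)) := by
  induction k using Nat.twoStepInduction with
  | zero =>
    norm_num [Gamma_one_half_eq]
    rw [← sq, sq_sqrt pi_pos.le]
  | one =>
    have h32 : Gamma (3 / 2) = √π / 2 := by
      rw [show (3 / 2 : ℝ) = 1 / 2 + 1 by norm_num, Gamma_add_one (by norm_num), Gamma_one_half_eq]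
      ring
    norm_num [h32]
    field_simp
  | more k ih _ =>
    rw [integral_sin_pow, ih]
    simp only [sin_zero, cos_pi_div_two, zero_pow k.succ_ne_zero, mul_zero, sub_zero]
    push_cast
    rw [show ((k : ℝ) + 2 + 1) / 2 = (k + 1) / 2 + 1 by ring,
      show ((k : ℝ) + 2) / 2 + 1 = (k / 2 + 1) + 1 by ring,
      Gamma_add_one (s := (k + 1) / 2) (by positivity),
      Gamma_add_one (s := k / 2 + 1) (by positivity)]
    have : Gamma (k / 2 + 1) ≠ 0 := (Gamma_pos_of_pos (by positivity)).ne'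
    field_simp
    ring

noncomputable def uRadial (R r : ℝ) : ℝ :=
  π * R ^ 2 / 8 + r / 4 * √(R ^ 2 - r ^ 2) - R ^ 2 / 4 * arcsin (r / R)

@[fun_prop]
theorem continuous_uRadial (R : ℝ) : Continuous (uRadial R) := by
  unfold uRadial; fun_prop

theorem uRadial_self {R : ℝ} (hR : R ≠ 0) : uRadial R R = 0 := by
  simp only [uRadial, div_self hR, arcsin_one, sub_self, sqrt_zero, mul_zero, add_zero]
  ring

noncomputable def uAngle (θ : ℝ) : ℝ :=
  π / 8 + sin θ * cos θ / 4 - θ / 4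

@[fun_prop]
theorem continuous_uAngle : Continuous uAngle := by
  unfold uAngle; fun_prop

theorem uAngle_pi_div_two : uAngle (π / 2) = 0 := by
  simp only [uAngle, cos_pi_div_two]
  ring

theorem uRadial_mul_sin {R θ : ℝ} (hR : 0 < R) (hθ : θ ∈ Icc 0 (π / 2)) :
    uRadial R (R * sin θ) = R ^ 2 * uAngle θ := by
  have hcos : 0 ≤ cos θ := cos_nonneg_of_mem_Icc ⟨by linarith [pi_pos, hθ.1], hθ.2⟩
  have hsqrt : √(R ^ 2 - (R * sin θ) ^ 2) = R * cos θ := by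
    rw [← sqrt_sq (by positivity : 0 ≤ R * cos θ)]
    congr 1
    linear_combination -R ^ 2 * sin_sq_add_cos_sq θ
  rw [uRadial, uAngle, hsqrt, mul_div_cancel_left₀ _ hR.ne',
    arcsin_sin (by linarith [pi_pos, hθ.1]) hθ.2]
  ring

theorem hasDerivAt_uAngle (θ : ℝ) : HasDerivAt uAngle (-(sin θ ^ 2) / 2) θ := by
  have := (((hasDerivAt_sin θ).mul (hasDerivAt_cos θ)).div_const 4).const_add (π / 8) |>.sub
    ((hasDerivAt_id θ).div_const 4)
  exact this.congr_deriv (by linear_combination (1 / 4 : ℝ) * sin_sq_add_cos_sq θ)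

theorem integral_sin_pow_mul_cos_mul_uAngle (k : ℕ) :
    ∫ θ in (0 : ℝ)..(π / 2), sin θ ^ k * cos θ * uAngle θ =
      (∫ θ in (0 : ℝ)..(π / 2), sin θ ^ (k + 3)) / (2 * (k + 1)) := by
  have hk : (k : ℝ) + 1 ≠ 0 := by positivity
  have hv (θ : ℝ) : HasDerivAt (fun t => sin t ^ (k + 1) / (k + 1)) (sin θ ^ k * cos θ) θ := by
    have := ((hasDerivAt_sin θ).pow (k + 1)).div_const ((k : ℝ) + 1)
    exact this.congr_deriv (by push_cast; field_simp)
  have hibp := intervalIntegral.integral_deriv_mul_eq_sub (a := 0) (b := π / 2) (fun θ _ => hv θ)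
    (fun θ _ => hasDerivAt_uAngle θ)
    (by apply Continuous.intervalIntegrable; fun_prop)
    (by apply Continuous.intervalIntegrable; fun_prop)
  have hrest : (fun θ => sin θ ^ (k + 1) / (k + 1) * (-(sin θ ^ 2) / 2)) =
      fun θ => -(1 / (2 * (k + 1))) * sin θ ^ (k + 3) := by
    ext θ; field_simp; ring
  rw [intervalIntegral.integral_add (by apply Continuous.intervalIntegrable; fun_prop)
    (by apply Continuous.intervalIntegrable; fun_prop), hrest,
    intervalIntegral.integral_const_mul] at hibp
  simp only [sin_zero, sin_pi_div_two, uAngle_pi_div_two, zero_pow k.succ_ne_zero] at hibp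
  linear_combination hibp

theorem integral_pow_mul_uRadial (k : ℕ) {R : ℝ} (hR : 0 < R) :
    ∫ r in (0 : ℝ)..R, r ^ k * uRadial R r =
      R ^ (k + 3) * (∫ θ in (0 : ℝ)..(π / 2), sin θ ^ (k + 3)) / (2 * (k + 1)) := by
  have hsubst := intervalIntegral.integral_comp_mul_deriv (a := 0) (b := π / 2)
    (f := fun θ => R * sin θ) (g := fun r => r ^ k * uRadial R r)
    (fun θ _ => (hasDerivAt_sin θ).const_mul R)
    (by fun_prop) (by fun_prop)
  simp only [sin_zero, sin_pi_div_two, mul_zero, mul_one] at hsubst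
  rw [← hsubst, intervalIntegral.integral_congr (g := fun θ => R ^ (k + 3) *
      (sin θ ^ k * cos θ * uAngle θ)), intervalIntegral.integral_const_mul,
    integral_sin_pow_mul_cos_mul_uAngle, ← mul_div_assoc]
  intro θ hθ
  rw [uIcc_of_le (by positivity)] at hθ
  simp only [Function.comp, uRadial_mul_sin hR hθ]
  ring

theorem measureReal_ball_zero_one_fin_two_mul {n : ℕ} (hn : 1 ≤ n) :
    volume.real (ball (0 : EuclideanSpace ℝ (Fin (2 * n))) 1) = π ^ n / Gamma (n + 1) := by
  have : Nonempty (Fin (2 * n)) := ⟨⟨0, by omega⟩⟩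
  rw [measureReal_def, EuclideanSpace.volume_ball, Fintype.card_fin, ENNReal.ofReal_one, one_pow,
    one_mul, ENNReal.toReal_ofReal (by positivity), pow_mul, sq_sqrt pi_pos.le]
  push_cast
  ring_nf

theorem setIntegral_ball_uR_eq_radial {n : ℕ} (hn : 1 ≤ n) {R : ℝ} (hR : 0 < R) :
    ∫ z in ball (0 : EuclideanSpace ℝ (Fin (2 * n))) R, uR n R z =
      2 * n * volume.real (ball (0 : EuclideanSpace ℝ (Fin (2 * n))) 1) *
        ∫ r in (0 : ℝ)..R, r ^ (2 * n - 1) * uRadial R r := by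
  have : Nontrivial (EuclideanSpace ℝ (Fin (2 * n))) := by
    have : Nonempty (Fin (2 * n)) := ⟨⟨0, by omega⟩⟩
    infer_instance
  have hvanish (z) (hz : z ∉ ball (0 : EuclideanSpace ℝ (Fin (2 * n))) R) : uR n R z = 0 := by
    rw [mem_ball_zero_iff, not_lt] at hz
    rcases hz.lt_or_eq with hz | hz
    · exact if_neg hz.not_ge
    · rw [uR, if_pos hz.ge, ← hz]
      exact uRadial_self hR.ne'
  set F : ℝ → ℝ := fun r => if r ≤ R then uRadial R r else 0
  have hF : (∫ z, uR n R z) = ∫ z, F ‖z‖ := rfl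
  rw [setIntegral_eq_integral_of_forall_compl_eq_zero hvanish, hF,
    integral_fun_norm_addHaar volume F, finrank_euclideanSpace_fin, nsmul_eq_mul, smul_eq_mul,
    intervalIntegral.integral_of_le hR.le,
    setIntegral_eq_of_subset_of_forall_sdiff_eq_zero measurableSet_Ioi
      (Ioc_subset_Ioi_self : Ioc 0 R ⊆ Ioi 0)]
  · rw [setIntegral_congr_fun (g := fun r => r ^ (2 * n - 1) * uRadial R r) measurableSet_Ioc
      fun r hr => by simp only [F, smul_eq_mul, if_pos hr.2]]
    push_cast
    ring
  · intro r ⟨hr0, hrR⟩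
    simp only [F, smul_eq_mul, if_neg fun h => hrR ⟨hr0, h⟩, mul_zero]

theorem setIntegral_ball_uR_eq {n : ℕ} (hn : 1 ≤ n) {R : ℝ} (hR : 0 < R) :
    ∫ z in ball (0 : EuclideanSpace ℝ (Fin (2 * n))) R, uR n R z =
      π ^ ((n : ℝ) + 1 / 2) * Gamma ((n : ℝ) + 3 / 2) /
        (4 * n * Gamma n * Gamma ((n : ℝ) + 2)) * R ^ (2 * (n : ℝ) + 2) := by
  have hk : 2 * n - 1 + 3 = 2 * n + 2 := by omega
  rw [setIntegral_ball_uR_eq_radial hn hR, measureReal_ball_zero_one_fin_two_mul hn,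
    integral_pow_mul_uRadial _ hR, hk, integral_sin_pow_zero_pi_div_two]
  push_cast [Nat.cast_sub (by omega : 1 ≤ 2 * n)]
  have hn0 : (n : ℝ) ≠ 0 := by positivity
  rw [show (2 * (n : ℝ) + 2 + 1) / 2 = n + 3 / 2 by ring,
    show (2 * (n : ℝ) + 2) / 2 + 1 = n + 2 by ring, Gamma_add_one hn0,
    rpow_add pi_pos, rpow_natCast, ← sqrt_eq_rpow,
    show 2 * (n : ℝ) + 2 = ((2 * n + 2 : ℕ) : ℝ) by push_cast; ring, rpow_natCast]
  have : Gamma n ≠ 0 := (Gamma_pos_of_pos (by positivity)).ne'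
  have : Gamma (n + 2) ≠ 0 := (Gamma_pos_of_pos (by positivity)).ne'
  field_simp
  ring

theorem stmt_4 (n : ℕ) (hn : 1 ≤ n) (R : ℝ) (hR : 0 < R) (Q : ℝ) (hQ : Q = 2 * n + 2) :
    (∫ z in ball (0 : EuclideanSpace ℝ (Fin (2 * n))) R, uR n R z) =
      π ^ ((n : ℝ) + 1 / 2) * Real.Gamma ((n : ℝ) + 3 / 2) /
        (4 * n * Real.Gamma n * Real.Gamma ((n : ℝ) + 2)) * R ^ (2 * (n : ℝ) + 2) ∧
    (∫ z in ball (0 : EuclideanSpace ℝ (Fin (2 * n))) R, uR n R z) =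
      π ^ ((Q - 1) / 2) * Real.Gamma ((Q + 1) / 2) /
        (2 * (Q - 2) * Real.Gamma ((Q + 2) / 2) * Real.Gamma ((Q - 2) / 2)) * R ^ Q := by
  refine ⟨setIntegral_ball_uR_eq hn hR, ?_⟩
  rw [setIntegral_ball_uR_eq hn hR, hQ, show (2 * (n : ℝ) + 2 - 1) / 2 = n + 1 / 2 by ring,
    show (2 * (n : ℝ) + 2 + 1) / 2 = n + 3 / 2 by ring,
    show (2 * (n : ℝ) + 2 + 2) / 2 = n + 2 by ring, show (2 * (n : ℝ) + 2 - 2) / 2 = n by ring]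
  ring
end

section
/- For all t ≥ 0 and all θ ∈ [0, π], one has t² − (√(1 + t² + 2t·cos θ) − 1)·t·cos θ ≥ 0. -/
open Real

theorem stmt_9 (t θ : ℝ) (ht : 0 ≤ t) (hθ0 : 0 ≤ θ) (hθπ : θ ≤ π) :
    0 ≤ t ^ 2 - (Real.sqrt (1 + t ^ 2 + 2 * t * Real.cos θ) - 1) * t * Real.cos θ := by
  set c := Real.cos θ with hc
  have hc1 : c ≤ 1 := Real.cos_le_one θ
  have hc2 : -1 ≤ c := Real.neg_one_le_cos θ
  set E := 1 + t ^ 2 + 2 * t * c with hE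
  have hE1 : (1 + t * c) ^ 2 ≤ E := by nlinarith [mul_nonneg (sq_nonneg t) (mul_nonneg (by linarith : (0:ℝ) ≤ 1 - c) (by linarith : (0:ℝ) ≤ 1 + c))]
  have hE2 : E ≤ (1 + t) ^ 2 := by nlinarith
  have h0 : 0 ≤ Real.sqrt E := Real.sqrt_nonneg E
  have h1 : 1 + t * c ≤ Real.sqrt E := by
    calc 1 + t * c ≤ |1 + t * c| := le_abs_self _
    _ = Real.sqrt ((1 + t*c)^2) := (Real.sqrt_sq_eq_abs _).symm
    _ ≤ Real.sqrt E := Real.sqrt_le_sqrt hE1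
  have h2 : Real.sqrt E ≤ 1 + t := by
    calc Real.sqrt E ≤ Real.sqrt ((1+t)^2) := Real.sqrt_le_sqrt hE2
    _ = 1 + t := by rw [Real.sqrt_sq (by linarith)]
  nlinarith [mul_nonneg ht ht, sq_nonneg (t*c), mul_nonneg (mul_nonneg ht ht) (sq_nonneg c),
    mul_le_mul_of_nonneg_left h2 ht, mul_le_mul_of_nonneg_left h1 ht]
end

section
/- Let n ≥ 1 and let f : ℝ^{2n} → ℝ be defined on the closed unit ball by f(z) = π/8 + (|z|/4)·√(1 − |z|²) − (1/4)·arcsin(|z|). Then f is twice continuously differentiable on the open unit ball B(0,1), but f is not three times continuously differentiable on any neighborhood of the origin (the third-order radial derivative has a jump discontinuity at 0). -/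
/-!
Write `g r = r / 4 * √(1 - r ^ 2) - arcsin r / 4`, so that `f = π / 8 + g ∘ ‖·‖` on the closed
ball. One computes `g' r = r ^ 2 * k r` with `k r = -(2 * √(1 - r ^ 2))⁻¹` smooth for `|r| < 1`;
hence `D (g ∘ ‖·‖) z = k ‖z‖ • ⟪‖z‖ • z, ·⟫`, and `z ↦ ‖z‖ • z` is `C¹` (smooth away from `0`,
with derivative `O(‖z‖)`), so `f` is `C²` on the open ball.

Along a unit line `t ↦ t • e` the function is `g |t|`, equal to `g` for `t > 0` and to
`g (-·)` for `t < 0`. If it were `C³` near `0`, its third derivative at `0` would equal both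
`g''' 0` and `-g''' 0`; but `g''' 0 = 2 * k 0 = -1`.
-/

open Metric Real Filter Topology Asymptotics

theorem ContDiffAt.continuousAt_iteratedDeriv {𝕜 F : Type*} [NontriviallyNormedField 𝕜]
    [NormedAddCommGroup F] [NormedSpace 𝕜 F] {f : 𝕜 → F} {x : 𝕜} {n : ℕ}
    (hf : ContDiffAt 𝕜 n f x) : ContinuousAt (iteratedDeriv n f) x := by
  rw [show iteratedDeriv n f = _ from funext fun y => iteratedDeriv_eq_iteratedFDeriv]
  exact (continuous_eval_const _).continuousAt.comp (hf.continuousAt_iteratedFDeriv le_rfl)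

theorem ContDiffAt.iteratedDeriv_eq_of_eventuallyEq_nhdsWithin {𝕜 F : Type*}
    [NontriviallyNormedField 𝕜] [NormedAddCommGroup F] [NormedSpace 𝕜 F] {f g : 𝕜 → F}
    {s : Set 𝕜} {x : 𝕜} {n : ℕ} [(𝓝[s] x).NeBot] (hf : ContDiffAt 𝕜 n f x)
    (hg : ContDiffAt 𝕜 n g x) (hs : IsOpen s) (hfg : f =ᶠ[𝓝[s] x] g) :
    iteratedDeriv n f x = iteratedDeriv n g x := by
  have hderiv : iteratedDeriv n f =ᶠ[𝓝[s] x] iteratedDeriv n g := by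
    filter_upwards [eventually_eventually_nhdsWithin.2 hfg, self_mem_nhdsWithin] with y hy hys
    rw [hs.nhdsWithin_eq hys] at hy
    exact Filter.EventuallyEq.iteratedDeriv_eq n hy
  exact tendsto_nhds_unique
    ((hf.continuousAt_iteratedDeriv.mono_left nhdsWithin_le_nhds).congr' hderiv)
    (hg.continuousAt_iteratedDeriv.mono_left nhdsWithin_le_nhds)

noncomputable def radialProfile (r : ℝ) : ℝ := r / 4 * √(1 - r ^ 2) - arcsin r / 4

noncomputable def radialProfileDerivDivSq (r : ℝ) : ℝ := -(2 * √(1 - r ^ 2))⁻¹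

theorem hasDerivAt_radialProfile {r : ℝ} (hr : |r| < 1) :
    HasDerivAt radialProfile (r ^ 2 * radialProfileDerivDivSq r) r := by
  obtain ⟨hr₁, hr₂⟩ := abs_lt.1 hr
  have hpos : 0 < 1 - r ^ 2 := sub_pos.2 ((sq_lt_one_iff_abs_lt_one r).2 hr)
  have hsqrt : HasDerivAt (fun t : ℝ => √(1 - t ^ 2)) (-(2 * r) / (2 * √(1 - r ^ 2))) r := by
    simpa using ((hasDerivAt_pow 2 r).const_sub 1).sqrt hpos.ne'
  have h := ((hasDerivAt_id' r).div_const 4).mul hsqrt |>.sub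
    ((hasDerivAt_arcsin hr₁.ne' hr₂.ne).div_const 4)
  refine h.congr_deriv ?_
  have hs : √(1 - r ^ 2) ^ 2 = 1 - r ^ 2 := sq_sqrt hpos.le
  have hsqrt_pos : 0 < √(1 - r ^ 2) := sqrt_pos.2 hpos
  rw [radialProfileDerivDivSq]
  field_simp
  linear_combination 2 * hs

theorem contDiffAt_sqrt_one_sub_sq {r : ℝ} (hr : |r| < 1) {n : WithTop ℕ∞} :
    ContDiffAt ℝ n (fun t : ℝ => √(1 - t ^ 2)) r :=
  (contDiffAt_const.sub (contDiffAt_fun_id.pow 2)).sqrt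
    (sub_pos.2 ((sq_lt_one_iff_abs_lt_one r).2 hr)).ne'

theorem contDiffAt_radialProfile {r : ℝ} (hr : |r| < 1) {n : WithTop ℕ∞} :
    ContDiffAt ℝ n radialProfile r := by
  obtain ⟨hr₁, hr₂⟩ := abs_lt.1 hr
  exact ((contDiffAt_fun_id.div_const 4).mul (contDiffAt_sqrt_one_sub_sq hr)).sub
    ((contDiffAt_arcsin hr₁.ne' hr₂.ne).div_const 4)

theorem iteratedDeriv_three_radialProfile_zero : iteratedDeriv 3 radialProfile 0 = -1 := by
  have hderiv : deriv radialProfile =ᶠ[𝓝 0] fun r => r ^ 2 * radialProfileDerivDivSq r := by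
    filter_upwards [Ioo_mem_nhds (show (-1 : ℝ) < 0 by norm_num) one_pos] with r hr
    exact (hasDerivAt_radialProfile (abs_lt.2 hr)).deriv
  have hcoeff : ContDiffAt ℝ 2 radialProfileDerivDivSq 0 := by
    exact ((contDiffAt_const.mul (contDiffAt_sqrt_one_sub_sq (by simp))).inv (by simp)).neg
  rw [iteratedDeriv_succ', hderiv.iteratedDeriv_eq,
    iteratedDeriv_fun_mul (contDiffAt_fun_id.pow 2) hcoeff]
  simp [Finset.sum_range_succ, radialProfileDerivDivSq]

section InnerProductSpace

variable {E : Type*} [NormedAddCommGroup E] [InnerProductSpace ℝ E]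

theorem hasFDerivAt_norm {x : E} (hx : x ≠ 0) :
    HasFDerivAt (‖·‖) (‖x‖⁻¹ • innerSL ℝ x) x := by
  have h := (hasStrictFDerivAt_norm_sq x).hasFDerivAt.sqrt (by simpa using hx)
  simp only [Real.sqrt_sq (norm_nonneg _)] at h
  refine h.congr_fderiv ?_
  rw [← ofNat_smul_eq_nsmul ℝ 2, smul_smul]
  congr 1
  field_simp

theorem HasDerivAt.hasFDerivAt_comp_norm {g : ℝ → ℝ} {k : ℝ} {x : E}
    (hg : HasDerivAt g (‖x‖ * k) ‖x‖) :
    HasFDerivAt (fun y : E => g ‖y‖) (k • innerSL ℝ x) x := by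
  rcases eq_or_ne x 0 with rfl | hx
  · simp only [norm_zero, zero_mul, map_zero, smul_zero] at hg ⊢
    rw [hasFDerivAt_iff_isLittleO_nhds_zero]
    rw [hasDerivAt_iff_isLittleO_nhds_zero] at hg
    simp only [zero_add, smul_zero, sub_zero, norm_zero, zero_apply] at hg ⊢
    exact isLittleO_norm_right.1 (hg.comp_tendsto tendsto_norm_zero)
  · refine (hg.comp_hasFDerivAt x (hasFDerivAt_norm hx)).congr_fderiv ?_
    rw [smul_smul, mul_right_comm, mul_inv_cancel₀ (norm_ne_zero_iff.2 hx), one_mul]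

theorem hasFDerivAt_norm_smul_self_zero : HasFDerivAt (fun x : E => ‖x‖ • x) (0 : E →L[ℝ] E) 0 := by
  rw [hasFDerivAt_iff_isLittleO_nhds_zero]
  have h : (fun x : E => ‖x‖) =o[𝓝 0] (fun _ => (1 : ℝ)) :=
    isLittleO_one_iff ℝ |>.2 tendsto_norm_zero
  simpa using h.smul_isBigO (isBigO_refl (fun x : E => x) (𝓝 0))

theorem norm_fderiv_norm_smul_self_le (x : E) :
    ‖fderiv ℝ (fun y : E => ‖y‖ • y) x‖ ≤ 2 * ‖x‖ := by
  rcases eq_or_ne x 0 with rfl | hx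
  · simp [hasFDerivAt_norm_smul_self_zero.fderiv]
  rw [fderiv_fun_smul (hasFDerivAt_norm hx).differentiableAt differentiableAt_fun_id, fderiv_fun_id]
  have hnorm : ‖fderiv ℝ (‖·‖) x‖ ≤ 1 := by
    simpa using norm_fderiv_le_of_lipschitz ℝ (x₀ := x) lipschitzWith_one_norm
  calc _ ≤ ‖x‖ * ‖ContinuousLinearMap.id ℝ E‖ + ‖fderiv ℝ (‖·‖) x‖ * ‖x‖ := by
        grw [norm_add_le, norm_smul, ContinuousLinearMap.norm_smulRight_apply,
          Real.norm_of_nonneg (norm_nonneg x)]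
    _ ≤ ‖x‖ * 1 + 1 * ‖x‖ := by gcongr; exact ContinuousLinearMap.norm_id_le
    _ = 2 * ‖x‖ := by ring

theorem contDiff_norm_smul_self : ContDiff ℝ 1 (fun x : E => ‖x‖ • x) := by
  have hsmooth {x : E} (hx : x ≠ 0) : ContDiffAt ℝ 2 (fun y : E => ‖y‖ • y) x :=
    (contDiffAt_norm ℝ hx).smul contDiffAt_id
  rw [contDiff_one_iff_fderiv]
  refine ⟨fun x => ?_, continuous_iff_continuousAt.2 fun x => ?_⟩
  · rcases eq_or_ne x 0 with rfl | hx
    · exact hasFDerivAt_norm_smul_self_zero.differentiableAt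
    · exact (hsmooth hx).differentiableAt (by norm_num)
  · rcases eq_or_ne x 0 with rfl | hx
    · rw [ContinuousAt, hasFDerivAt_norm_smul_self_zero.fderiv]
      refine squeeze_zero_norm norm_fderiv_norm_smul_self_le ?_
      simpa using tendsto_norm_zero.const_mul (2 : ℝ)
    · exact (hsmooth hx).continuousAt_fderiv (by norm_num)

theorem contDiffOn_two_radialProfile_comp_norm :
    ContDiffOn ℝ 2 (fun z : E => radialProfile ‖z‖) (ball 0 1) := by
  have hderiv : ∀ z ∈ ball (0 : E) 1, HasFDerivAt (fun z : E => radialProfile ‖z‖)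
      (radialProfileDerivDivSq ‖z‖ • innerSL ℝ (‖z‖ • z)) z := by
    intro z hz
    have hz' : |‖z‖| < 1 := by simpa using hz
    have h := (hasDerivAt_radialProfile hz').congr_deriv
      (show _ = ‖z‖ * (‖z‖ * radialProfileDerivDivSq ‖z‖) by ring)
    convert h.hasFDerivAt_comp_norm using 1
    rw [map_smul, smul_smul, mul_comm]
  have hcoeff : ContDiffOn ℝ 1 (fun z : E => radialProfileDerivDivSq ‖z‖) (ball 0 1) := by
    intro z hz
    have hpos : 0 < 1 - ‖z‖ ^ 2 :=
      sub_pos.2 (pow_lt_one₀ (norm_nonneg z) (mem_ball_zero_iff.1 hz) two_ne_zero)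
    unfold radialProfileDerivDivSq
    exact ((contDiffAt_const.mul ((contDiffAt_const.sub (contDiff_norm_sq ℝ).contDiffAt).sqrt
      hpos.ne')).inv (by positivity)).neg.contDiffWithinAt
  rw [show (2 : WithTop ℕ∞) = 1 + 1 from rfl, contDiffOn_succ_iff_fderiv_of_isOpen isOpen_ball]
  refine ⟨fun z hz => (hderiv z hz).differentiableAt.differentiableWithinAt, by simp, ?_⟩
  exact (hcoeff.smul ((innerSL ℝ).contDiff.comp contDiff_norm_smul_self).contDiffOn).congr
    fun z hz => (hderiv z hz).fderiv

theorem not_contDiffAt_three_radialProfile_comp_norm [Nontrivial E] :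
    ¬ ContDiffAt ℝ 3 (fun z : E => radialProfile ‖z‖) 0 := by
  intro h
  obtain ⟨e, he⟩ := exists_norm_eq E zero_le_one
  have hline : ContDiffAt ℝ 3 (fun t : ℝ => radialProfile |t|) 0 := by
    have hL : ContDiffAt ℝ 3 (fun t : ℝ => t • e) 0 := (contDiff_id.smul contDiff_const).contDiffAt
    have h' : ContDiffAt ℝ 3 (fun z : E => radialProfile ‖z‖) ((0 : ℝ) • e) := by simpa using h
    simpa [Function.comp_def, norm_smul, he] using h'.comp 0 hL
  have hprofile : ContDiffAt ℝ 3 radialProfile 0 := contDiffAt_radialProfile (by simp)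
  have hright := hline.iteratedDeriv_eq_of_eventuallyEq_nhdsWithin hprofile isOpen_Ioi
    (eventually_nhdsWithin_of_forall fun t (ht : 0 < t) => by simp [abs_of_pos ht])
  have hreflected : ContDiffAt ℝ 3 (fun t : ℝ => radialProfile (-t)) 0 :=
    (contDiffAt_radialProfile (r := -0) (by simp)).comp 0 contDiffAt_id.neg
  have hleft := hline.iteratedDeriv_eq_of_eventuallyEq_nhdsWithin hreflected isOpen_Iio
    (eventually_nhdsWithin_of_forall fun t (ht : t < 0) => by simp [abs_of_neg ht])
  rw [iteratedDeriv_comp_neg, neg_zero, iteratedDeriv_three_radialProfile_zero] at hleft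
  rw [iteratedDeriv_three_radialProfile_zero] at hright
  norm_num [hright] at hleft

end InnerProductSpace

theorem stmt_13 (n : ℕ) (hn : 1 ≤ n) (f : EuclideanSpace ℝ (Fin (2 * n)) → ℝ)
    (hf : ∀ z : EuclideanSpace ℝ (Fin (2 * n)), ‖z‖ ≤ 1 →
      f z = π / 8 + ‖z‖ / 4 * Real.sqrt (1 - ‖z‖ ^ 2) - Real.arcsin ‖z‖ / 4) :
    ContDiffOn ℝ 2 f (ball 0 1) ∧
    ¬ ∃ U ∈ nhds (0 : EuclideanSpace ℝ (Fin (2 * n))), ContDiffOn ℝ 3 f U := by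
  have hfeq : Set.EqOn f (fun z => π / 8 + radialProfile ‖z‖) (closedBall 0 1) := fun z hz => by
    dsimp only
    rw [hf z (mem_closedBall_zero_iff.1 hz), radialProfile, add_sub_assoc]
  refine ⟨(contDiffOn_const.add contDiffOn_two_radialProfile_comp_norm).congr
    fun z hz => hfeq (ball_subset_closedBall hz), ?_⟩
  rintro ⟨U, hU, hfU⟩
  have : Nonempty (Fin (2 * n)) := ⟨⟨0, by omega⟩⟩
  apply not_contDiffAt_three_radialProfile_comp_norm (E := EuclideanSpace ℝ (Fin (2 * n)))
  have hf0 := (hfU.contDiffAt hU).congr_of_eventuallyEq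
    (mem_of_superset (closedBall_mem_nhds 0 one_pos) hfeq.symm)
  simpa using (contDiffAt_const (c := -(π / 8))).add hf0
end

section
/- Let n ≥ 1, Q = 2n+2, R > 0, and let ū : [0, R²/4] → ℝ be defined by ū(s) = πR²/8 + (1/2)·√(s(R² − 4s)) − (R²/4)·arcsin(2√s/R). Then for every s ∈ (0, R²/4): −(2s·ū''(s) + (Q−3)·ū'(s)·(1 + ū'(s)²)) / (2·√s·(1 + ū'(s)²)^{3/2}) = (Q−2)/R. In other words, the H-mean curvature of the hypersurface t = ū(|z|²/4) in the Heisenberg group ℍⁿ is the constant (Q−2)/R. -/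
/-!
With `a = √s` and `b = √(R² - 4s)` one has `R² = b² + 4a²`, `ū' = -2a/b`, `ū'' = -R²/(a b³)` and
`1 + ū'² = R²/b²`. Both terms of the numerator are then multiples of `a R² / b³`, with total
coefficient `-2(Q - 2)`, while the denominator is `2 a R³ / b³`; the quotient is `(Q - 2)/R`.
-/

open Real Filter Topology

noncomputable def isoProfile (R s : ℝ) : ℝ :=
  π * R ^ 2 / 8 + (1 / 2) * √(s * (R ^ 2 - 4 * s)) - R ^ 2 / 4 * arcsin (2 * √s / R)

noncomputable def isoSlope (R s : ℝ) : ℝ :=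
  -2 * √s / √(R ^ 2 - 4 * s)

section Derivatives

variable {R s : ℝ}

lemma hasDerivAt_sqrt_mul_sub (hs : 0 < s) (hsR : 0 < R ^ 2 - 4 * s) :
    HasDerivAt (fun y => √(y * (R ^ 2 - 4 * y)))
      ((R ^ 2 - 8 * s) / (2 * (√s * √(R ^ 2 - 4 * s)))) s := by
  have hpoly : HasDerivAt (fun y => y * (R ^ 2 - 4 * y)) (R ^ 2 - 8 * s) s := by
    refine ((hasDerivAt_id' s).mul
      (((hasDerivAt_id' s).const_mul 4).const_sub (R ^ 2))).congr_deriv ?_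
    ring
  rw [← Real.sqrt_mul hs.le]
  exact hpoly.sqrt (mul_pos hs hsR).ne'

lemma hasDerivAt_arcsin_two_sqrt_div (hR : 0 < R) (hs : 0 < s) (hsR : 0 < R ^ 2 - 4 * s) :
    HasDerivAt (fun y => arcsin (2 * √y / R)) (1 / (√s * √(R ^ 2 - 4 * s))) s := by
  have ha := Real.sqrt_pos.mpr hs
  have hlt : 2 * √s / R < 1 := by
    rw [div_lt_one hR]
    nlinarith [Real.sq_sqrt hs.le]
  have hinner : HasDerivAt (fun y => 2 * √y / R) (1 / (R * √s)) s := by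
    refine (((Real.hasDerivAt_sqrt hs.ne').const_mul 2).div_const R).congr_deriv ?_
    field_simp
  have hcos : √(1 - (2 * √s / R) ^ 2) = √(R ^ 2 - 4 * s) / R := by
    rw [← Real.sqrt_sq hR.le, ← Real.sqrt_div' _ (sq_nonneg R), Real.sqrt_sq hR.le]
    congr 1
    field_simp
    rw [Real.sq_sqrt hs.le]
    ring
  refine ((Real.hasDerivAt_arcsin (by linarith [div_pos (mul_pos two_pos ha) hR]) hlt.ne).comp
    s hinner).congr_deriv ?_
  rw [hcos]
  field_simp

lemma hasDerivAt_isoProfile (hR : 0 < R) (hs : s ∈ Set.Ioo 0 (R ^ 2 / 4)) :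
    HasDerivAt (isoProfile R) (isoSlope R s) s := by
  obtain ⟨hs0, hs1⟩ := hs
  have hsR : 0 < R ^ 2 - 4 * s := by linarith
  refine (((hasDerivAt_const s (π * R ^ 2 / 8)).add
    ((hasDerivAt_sqrt_mul_sub hs0 hsR).const_mul (1 / 2))).sub
    ((hasDerivAt_arcsin_two_sqrt_div hR hs0 hsR).const_mul (R ^ 2 / 4))).congr_deriv ?_
  have ha := Real.sqrt_pos.mpr hs0
  have hb := Real.sqrt_pos.mpr hsR
  have ha2 := Real.sq_sqrt hs0.le
  rw [isoSlope]
  generalize √(R ^ 2 - 4 * s) = b at *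
  generalize √s = a at *
  subst ha2
  field_simp
  ring

lemma deriv_isoProfile_eventuallyEq (hR : 0 < R) (hs : s ∈ Set.Ioo 0 (R ^ 2 / 4)) :
    deriv (isoProfile R) =ᶠ[𝓝 s] isoSlope R := by
  filter_upwards [isOpen_Ioo.mem_nhds hs] with y hy
  exact (hasDerivAt_isoProfile hR hy).deriv

lemma hasDerivAt_isoSlope (hs : 0 < s) (hsR : 0 < R ^ 2 - 4 * s) :
    HasDerivAt (isoSlope R) (-R ^ 2 / (√s * √(R ^ 2 - 4 * s) ^ 3)) s := by
  have ha := Real.sqrt_pos.mpr hs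
  have hb := Real.sqrt_pos.mpr hsR
  have hlin : HasDerivAt (fun y => R ^ 2 - 4 * y) (-4) s := by
    simpa using ((hasDerivAt_id s).const_mul 4).const_sub (R ^ 2)
  refine (((Real.hasDerivAt_sqrt hs.ne').const_mul (-2)).div (hlin.sqrt hsR.ne')
    hb.ne').congr_deriv ?_
  have hR2 : R ^ 2 = √(R ^ 2 - 4 * s) ^ 2 + 4 * √s ^ 2 := by
    rw [Real.sq_sqrt hsR.le, Real.sq_sqrt hs.le]
    ring
  generalize √(R ^ 2 - 4 * s) = b at *
  rw [hR2]
  field_simp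
  ring

end Derivatives

noncomputable def radialHMeanCurvature (Q s u' u'' : ℝ) : ℝ :=
  -(2 * s * u'' + (Q - 3) * u' * (1 + u' ^ 2)) / (2 * √s * √(1 + u' ^ 2) ^ 3)

lemma radialHMeanCurvature_eq {a b R s : ℝ} (Q : ℝ) (ha : 0 < a) (hb : 0 < b) (hR : 0 < R)
    (hs : s = a ^ 2) (hRab : R ^ 2 = b ^ 2 + 4 * a ^ 2) :
    radialHMeanCurvature Q s (-2 * a / b) (-R ^ 2 / (a * b ^ 3)) = (Q - 2) / R := by
  have hone : 1 + (-2 * a / b) ^ 2 = (R / b) ^ 2 := by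
    field_simp
    linear_combination -hRab
  rw [radialHMeanCurvature, hone, Real.sqrt_sq (by positivity), hs, Real.sqrt_sq ha.le]
  field_simp
  ring

theorem stmt_15_general (Q R : ℝ) (hR : 0 < R)
    (ubar : ℝ → ℝ)
    (hubar : ∀ s ∈ Set.Icc (0 : ℝ) (R ^ 2 / 4),
      ubar s = π * R ^ 2 / 8 + (1 / 2) * Real.sqrt (s * (R ^ 2 - 4 * s)) -
        R ^ 2 / 4 * Real.arcsin (2 * Real.sqrt s / R)) :
    ∀ s ∈ Set.Ioo (0 : ℝ) (R ^ 2 / 4),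
      -(2 * s * deriv (deriv ubar) s +
          (Q - 3) * deriv ubar s * (1 + deriv ubar s ^ 2)) /
        (2 * Real.sqrt s * Real.sqrt (1 + deriv ubar s ^ 2) ^ 3) = (Q - 2) / R := by
  intro s hs
  have hsR : 0 < R ^ 2 - 4 * s := by linarith [hs.2]
  have hprofile : ubar =ᶠ[𝓝 s] isoProfile R := by
    filter_upwards [isOpen_Ioo.mem_nhds hs] with y hy
    exact hubar y (Set.mem_Icc_of_Ioo hy)
  have hslope : deriv ubar =ᶠ[𝓝 s] isoSlope R :=
    hprofile.deriv.trans (deriv_isoProfile_eventuallyEq hR hs)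
  change radialHMeanCurvature Q s (deriv ubar s) (deriv (deriv ubar) s) = _
  rw [hslope.deriv_eq, (hasDerivAt_isoSlope hs.1 hsR).deriv, hslope.eq_of_nhds, isoSlope]
  refine radialHMeanCurvature_eq Q (Real.sqrt_pos.mpr hs.1) (Real.sqrt_pos.mpr hsR) hR
    (Real.sq_sqrt hs.1.le).symm ?_
  rw [Real.sq_sqrt hsR.le, Real.sq_sqrt hs.1.le]
  ring

theorem stmt_15 (n : ℕ) (hn : 1 ≤ n) (Q R : ℝ) (hQ : Q = 2 * n + 2) (hR : 0 < R)
    (ubar : ℝ → ℝ)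
    (hubar : ∀ s ∈ Set.Icc (0 : ℝ) (R ^ 2 / 4),
      ubar s = π * R ^ 2 / 8 + (1 / 2) * Real.sqrt (s * (R ^ 2 - 4 * s)) -
        R ^ 2 / 4 * Real.arcsin (2 * Real.sqrt s / R)) :
    ∀ s ∈ Set.Ioo (0 : ℝ) (R ^ 2 / 4),
      -(2 * s * deriv (deriv ubar) s +
          (Q - 3) * deriv ubar s * (1 + deriv ubar s ^ 2)) /
        (2 * Real.sqrt s * Real.sqrt (1 + deriv ubar s ^ 2) ^ 3) = (Q - 2) / R :=
  stmt_15_general Q R hR ubar hubar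
end
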